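/- arXiv:2108.05451 — 4 statements merged into one kernel-verified Lean document; each statement's English description precedes it below -/
import Mathlib

section
/- Let f : ℕ → ℝ be concave (i.e., f(k+1) - f(k) ≤ f(k) - f(k-1) for all k ≥ 1) with f(0) = 0 and f nonnegative. Then for every k ≥ 2, the quantity x_k := f(k) + ∑_{l=1}^{k-1} (-1)^l * C(2k-l, k-l) * f(k-l) satisfies x_k ≤ 0. -/
/-!
The terms `g l = C(2k-l, k-l) f(k-l)` decrease in `l` (binomial coefficients and `f`, which is
monotone being concave and bounded below), so the alternating tail `g 2 - g 3 + ⋯` is at most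
`g 2`. Hence `x_k ≤ f k - g 1 + g 2`, and Pascal's rule `C(2k-1, k-1) = C(2k-2, k-1) + C(2k-2, k-2)`
with `C(2k-2, k-1) ≥ 2` reduces this to `f k ≤ 2 f(k-1)`, which is concavity with `f 0 = 0`.
-/

open Finset

theorem Antitone.sum_range_alternating_mem_Icc {R : Type*} [Ring R] [PartialOrder R]
    [IsOrderedRing R] {g : ℕ → R} (hg : Antitone g) (hg0 : ∀ i, 0 ≤ g i) (n : ℕ) :
    ∑ i ∈ range n, (-1) ^ i * g i ∈ Set.Icc 0 (g 0) := by
  induction n generalizing g with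
  | zero => simpa using hg0 0
  | succ n ih =>
    obtain ⟨hlow, hupp⟩ :=
      ih (g := fun i ↦ g (i + 1)) (hg.comp_monotone add_left_mono) fun i ↦ hg0 _
    have hpeel : ∑ i ∈ range (n + 1), (-1) ^ i * g i
        = g 0 - ∑ i ∈ range n, (-1) ^ i * g (i + 1) := by
      simp [sum_range_succ', pow_succ, sum_neg_distrib, sub_eq_neg_add, add_comm]
    rw [hpeel]
    exact ⟨sub_nonneg.2 (hupp.trans (hg (Nat.zero_le 1))), sub_le_self _ hlow⟩

theorem sum_Icc_one_alternating_eq {R : Type*} [CommRing R] (g : ℕ → R) (n : ℕ) :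
    ∑ l ∈ Icc 1 (n + 1), (-1) ^ l * g l = -g 1 + ∑ i ∈ range n, (-1) ^ i * g (i + 2) := by
  induction n with
  | zero => simp
  | succ n ih =>
    rw [sum_Icc_succ_top (by omega), ih, sum_range_succ]
    ring

section AntitoneSub

variable {f : ℕ → ℝ}

theorem le_add_mul_sub_of_antitone_sub (hd : Antitone fun j ↦ f (j + 1) - f j) (j n : ℕ) :
    f (j + n) ≤ f j + n * (f (j + 1) - f j) := by
  induction n with
  | zero => simp
  | succ n ih =>
    have : f (j + n + 1) - f (j + n) ≤ f (j + 1) - f j := hd (Nat.le_add_right j n)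
    rw [← add_assoc]
    push_cast
    linarith

theorem monotone_of_antitone_sub (hd : Antitone fun j ↦ f (j + 1) - f j)
    (hf : BddBelow (Set.range f)) : Monotone f := by
  refine monotone_nat_of_le_succ fun j ↦ not_lt.1 fun hlt ↦ ?_
  obtain ⟨b, hb⟩ := hf
  obtain ⟨n, hn⟩ := exists_nat_gt ((f j - b) / (f j - f (j + 1)))
  rw [div_lt_iff₀ (sub_pos.2 hlt)] at hn
  have := hb ⟨j + n, rfl⟩
  linarith [le_add_mul_sub_of_antitone_sub hd j n]

theorem le_two_mul_of_antitone_sub (hd : Antitone fun j ↦ f (j + 1) - f j) (hf : Monotone f)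
    (h0 : f 0 = 0) {k : ℕ} (hk : 1 ≤ k) : f (k + 1) ≤ 2 * f k := by
  have hdiff : f (k + 1) - f k ≤ f (0 + 1) - f 0 := hd (Nat.zero_le k)
  have hle : f 1 ≤ f k := hf hk
  rw [zero_add, h0] at hdiff
  linarith

theorem add_choose_mul_le_choose_mul (hd : Antitone fun j ↦ f (j + 1) - f j) (hf : Monotone f)
    (hf0 : ∀ i, 0 ≤ f i) (h0 : f 0 = 0) (m : ℕ) :
    f (m + 2) + ((2 * m + 2).choose m : ℝ) * f m ≤ ((2 * m + 3).choose (m + 1) : ℝ) * f (m + 1) := by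
  have hcentral : 2 ≤ (2 * m + 2).choose (m + 1) := by
    simpa [Nat.centralBinom_eq_two_mul_choose, mul_add] using
      Nat.two_le_centralBinom (m + 1) m.succ_pos
  have hpascal : (2 * m + 3).choose (m + 1) = (2 * m + 2).choose (m + 1) + (2 * m + 2).choose m := by
    rw [Nat.choose_succ_succ', add_comm]
  have hdouble : f (m + 2) ≤ 2 * f (m + 1) := le_two_mul_of_antitone_sub hd hf h0 (by omega)
  have hcentral' : 2 * f (m + 1) ≤ ((2 * m + 2).choose (m + 1) : ℝ) * f (m + 1) :=
    mul_le_mul_of_nonneg_right (by exact_mod_cast hcentral) (hf0 _)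
  have hfm : ((2 * m + 2).choose m : ℝ) * f m ≤ ((2 * m + 2).choose m : ℝ) * f (m + 1) :=
    mul_le_mul_of_nonneg_left (hf m.le_succ) (Nat.cast_nonneg _)
  rw [hpascal, Nat.cast_add, add_mul]
  linarith

end AntitoneSub

theorem antitone_choose_mul {f : ℕ → ℝ} (hf : Monotone f) (hf0 : ∀ i, 0 ≤ f i) (k : ℕ) :
    Antitone fun l ↦ ((2 * k - l).choose (k - l) : ℝ) * f (k - l) := by
  refine antitone_nat_of_succ_le fun l ↦ ?_
  rcases lt_or_ge l k with hl | hl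
  · obtain ⟨m, rfl⟩ := Nat.exists_eq_add_of_lt hl
    rw [show 2 * (l + m + 1) - l = l + 2 * m + 1 + 1 by omega,
      show 2 * (l + m + 1) - (l + 1) = l + 2 * m + 1 by omega,
      show l + m + 1 - l = m + 1 by omega, show l + m + 1 - (l + 1) = m by omega,
      Nat.choose_succ_succ', Nat.cast_add]
    exact mul_le_mul (le_add_of_nonneg_right (Nat.cast_nonneg _)) (hf m.le_succ) (hf0 m)
      (by positivity)
  · simp [Nat.sub_eq_zero_of_le hl, Nat.sub_eq_zero_of_le (Nat.le_succ_of_le hl)]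

/-- For a concave, nonnegative `f : ℕ → ℝ` with `f 0 = 0`, the coefficients
`x_k = f k + ∑_{l=1}^{k-1} (-1)^l C(2k-l, k-l) f(k-l)` are nonpositive for all `k ≥ 2`. -/
theorem xk_nonpos (f : ℕ → ℝ)
    (hconc : ∀ k : ℕ, 1 ≤ k → f (k + 1) - f k ≤ f k - f (k - 1))
    (h0 : f 0 = 0) (hnonneg : ∀ k, 0 ≤ f k) :
    ∀ k : ℕ, 2 ≤ k →
      f k + ∑ l ∈ Finset.Icc 1 (k - 1),
        (-1 : ℝ) ^ l * (Nat.choose (2 * k - l) (k - l) : ℝ) * f (k - l) ≤ 0 := by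
  intro k hk
  obtain ⟨m, rfl⟩ := Nat.exists_eq_add_of_le' hk
  have hd : Antitone fun j ↦ f (j + 1) - f j :=
    antitone_nat_of_succ_le fun j ↦ by simpa using hconc (j + 1) (by omega)
  have hmono : Monotone f :=
    monotone_of_antitone_sub hd ⟨0, by rintro _ ⟨i, rfl⟩; exact hnonneg i⟩
  set g := fun l ↦ ((2 * (m + 2) - l).choose (m + 2 - l) : ℝ) * f (m + 2 - l)
  have htail : ∑ i ∈ range m, (-1) ^ i * g (i + 2) ≤ g 2 :=
    (((antitone_choose_mul hmono hnonneg (m + 2)).comp_monotone add_left_mono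
      ).sum_range_alternating_mem_Icc (fun i ↦ mul_nonneg (Nat.cast_nonneg _) (hnonneg _)) m).2
  have hg1 : g 1 = ((2 * m + 3).choose (m + 1) : ℝ) * f (m + 1) := by
    simp only [g, show 2 * (m + 2) - 1 = 2 * m + 3 by omega, show m + 2 - 1 = m + 1 by omega]
  have hg2 : g 2 = ((2 * m + 2).choose m : ℝ) * f m := by
    simp only [g, show 2 * (m + 2) - 2 = 2 * m + 2 by omega, Nat.add_sub_cancel]
  have hhead := add_choose_mul_le_choose_mul hd hmono hnonneg h0 m
  simp_rw [mul_assoc]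
  rw [show m + 2 - 1 = m + 1 by omega, sum_Icc_one_alternating_eq g]
  linarith
end

section
/- Let f : ℕ → ℝ be concave with f(0) = 0 and f nonnegative. Then for every k ≥ 3: if k is even, f(k) ≤ (k+1) f(1); and if k is odd, f(k) ≤ C(k+2, 2) f(2) − (k+1) f(1). -/
/-!
Concavity makes the increments `f (j + 1) - f j` nonincreasing, so `f` lies below each of its
chords extended to the right: `f k ≤ k f 1` and `f k ≤ f 1 + (k - 1) (f 2 - f 1)`. A concave
function on `ℕ` that is bounded below is nondecreasing, so `0 ≤ f 1 ≤ f 2`, and the two bounds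
are then weakened to the stated ones using `C(k + 2, 2) ≥ k + 2`.
-/

section ConcaveNat

variable {f : ℕ → ℝ}

theorem antitone_sub_succ_of_concave
    (hconc : ∀ k : ℕ, 1 ≤ k → f (k + 1) - f k ≤ f k - f (k - 1)) :
    Antitone fun j => f (j + 1) - f j :=
  antitone_nat_of_succ_le fun j => by simpa using hconc (j + 1) (by omega)

theorem le_add_mul_sub_succ_of_antitone (hf : Antitone fun j => f (j + 1) - f j) (a n : ℕ) :
    f (a + n) ≤ f a + n * (f (a + 1) - f a) := by
  induction n with
  | zero => simp
  | succ n ih =>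
    have hstep : f (a + n + 1) - f (a + n) ≤ f (a + 1) - f a := hf (Nat.le_add_right a n)
    rw [← add_assoc]
    push_cast
    linarith

theorem monotone_of_antitone_sub_succ_of_bddBelow (hf : Antitone fun j => f (j + 1) - f j)
    (hbdd : BddBelow (Set.range f)) : Monotone f := by
  obtain ⟨c, hc⟩ := hbdd
  refine monotone_nat_of_le_succ fun m => ?_
  by_contra! hdec
  have hdrop : 0 < f m - f (m + 1) := by linarith
  obtain ⟨n, hn⟩ := exists_nat_gt ((f m - c) / (f m - f (m + 1)))
  rw [div_lt_iff₀ hdrop] at hn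
  have hchord := le_add_mul_sub_succ_of_antitone hf m n
  have hlow : c ≤ f (m + n) := hc ⟨m + n, rfl⟩
  linarith

end ConcaveNat

/-- For concave nonnegative `f : ℕ → ℝ` with `f 0 = 0` and every `k ≥ 3`:
if `k` is even then `f k ≤ (k+1) f 1`, and if `k` is odd then
`f k ≤ C(k+2,2) f 2 − (k+1) f 1`. -/
theorem concave_key_inequalities (f : ℕ → ℝ)
    (hconc : ∀ k : ℕ, 1 ≤ k → f (k + 1) - f k ≤ f k - f (k - 1))
    (h0 : f 0 = 0) (hnonneg : ∀ k, 0 ≤ f k) :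
    ∀ k : ℕ, 3 ≤ k →
      (Even k → f k ≤ ((k : ℝ) + 1) * f 1) ∧
      (Odd k → f k ≤ (Nat.choose (k + 2) 2 : ℝ) * f 2 - ((k : ℝ) + 1) * f 1) := by
  intro k _
  have hanti := antitone_sub_succ_of_concave hconc
  have hf1 := hnonneg 1
  have hbdd : BddBelow (Set.range f) := ⟨0, by rintro _ ⟨j, rfl⟩; exact hnonneg j⟩
  have hf12 : f 1 ≤ f 2 := monotone_of_antitone_sub_succ_of_bddBelow hanti hbdd (by norm_num)
  refine ⟨fun _ => ?_, fun _ => ?_⟩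
  · have hchord := le_add_mul_sub_succ_of_antitone hanti 0 k
    rw [zero_add, h0] at hchord
    linarith
  · obtain ⟨n, rfl⟩ : ∃ n, k = 1 + n := ⟨k - 1, by omega⟩
    have hchord := le_add_mul_sub_succ_of_antitone hanti 1 n
    rw [Nat.cast_choose_two]
    push_cast at hchord ⊢
    nlinarith [mul_nonneg (mul_nonneg (Nat.cast_nonneg n) (Nat.cast_nonneg n)) (hnonneg 2),
      mul_nonneg (Nat.cast_nonneg n) (hnonneg 2)]
end

section
/- Let W ∈ ℝ^{n×n} be a symmetric matrix with nonnegative entries, and let β, δ, c > 0 satisfy β·c·λ(W) < δ, where λ(W) is the largest eigenvalue of W. Then the origin is a globally asymptotically stable equilibrium of the system dp_i/dt = β·c·(∑_j W_{ij} p_j)(1 − p_i) − δ·p_i on [0,1]^n; in particular every solution with initial data in [0,1]^n converges to 0 as t → ∞. -/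
/-!
The orthant is forward invariant: on a compact time interval the solution is bounded, so the
squared negative part `|min(p, 0)|²` satisfies a linear differential inequality, and since it
vanishes at `t = 0`, Grönwall keeps it zero.
On the orthant `pᵢ (W p)ᵢ (1 - pᵢ) ≤ pᵢ (W p)ᵢ`, so the Rayleigh bound `x ⬝ W x ≤ λ(W) |x|²` gives
`(|p|²)' ≤ 2 (β c λ(W) - δ) |p|²`, and `|p|²` decays exponentially.
-/

open Filter Set Matrix Finset Asymptotics Real Topology

theorem hasDerivAt_min_zero_sq (x : ℝ) :
    HasDerivAt (fun y : ℝ => min y 0 ^ 2) (2 * min x 0) x := by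
  rw [hasDerivAt_iff_isLittleO]
  refine IsBigO.trans_isLittleO ?_ (isLittleO_pow_sub_sub x one_lt_two)
  -- the remainder lies in `[0, (y - x)²]`
  refine IsBigO.of_bound 1 (Eventually.of_forall fun y => ?_)
  simp only [smul_eq_mul, Real.norm_eq_abs, norm_pow, sq_abs, one_mul]
  rw [abs_le]
  rcases min_cases x 0 with hx | hx <;> rcases min_cases y 0 with hy | hy <;>
    rw [hx.1, hy.1] <;> constructor <;> nlinarith

theorem le_mul_exp_of_hasDerivAt_le {f f' : ℝ → ℝ} {K a b : ℝ} (hab : a ≤ b)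
    (hf : ∀ t ∈ Icc a b, HasDerivAt f (f' t) t) (bound : ∀ t ∈ Ico a b, f' t ≤ K * f t) :
    f b ≤ f a * exp (K * (b - a)) := by
  have h := le_gronwallBound_of_liminf_deriv_right_le (ε := 0) (δ := f a)
    (fun t ht => (hf t ht).continuousAt.continuousWithinAt)
    (fun t ht r hr => (hf t (Ico_subset_Icc_self ht)).hasDerivWithinAt.liminf_right_slope_le hr)
    le_rfl (fun t ht => by simpa using bound t ht) b ⟨hab, le_rfl⟩
  rwa [gronwallBound_ε0] at h

variable {ι : Type*} [Fintype ι]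

theorem HasDerivAt.dotProduct_self {p : ℝ → ι → ℝ} {p' : ι → ℝ} {t : ℝ}
    (hp : HasDerivAt p p' t) : HasDerivAt (fun s => p s ⬝ᵥ p s) (2 * (p t ⬝ᵥ p')) t := by
  refine (HasDerivAt.fun_sum fun i (_ : i ∈ Finset.univ) =>
    (hasDerivAt_pi.1 hp i).fun_mul (hasDerivAt_pi.1 hp i)).congr_deriv ?_
  simp only [dotProduct, mul_sum]
  exact sum_congr rfl fun i _ => by ring

theorem HasDerivAt.dotProduct_min_zero_self {p : ℝ → ι → ℝ} {p' : ι → ℝ} {t : ℝ}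
    (hp : HasDerivAt p p' t) :
    HasDerivAt (fun s => (fun i => min (p s i) 0) ⬝ᵥ fun i => min (p s i) 0)
      (2 * ((fun i => min (p t i) 0) ⬝ᵥ p')) t := by
  have h := HasDerivAt.fun_sum fun i (_ : i ∈ Finset.univ) =>
    (hasDerivAt_min_zero_sq (p t i)).comp t (hasDerivAt_pi.1 hp i)
  simp only [Function.comp_def, sq] at h
  refine h.congr_deriv ?_
  simp only [dotProduct, mul_sum]
  exact sum_congr rfl fun i _ => by ring

theorem Matrix.IsHermitian.dotProduct_mulVec_le [DecidableEq ι] {W : Matrix ι ι ℝ}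
    (hW : W.IsHermitian) {L : ℝ} (hL : ∀ i, hW.eigenvalues i ≤ L) (x : ι → ℝ) :
    x ⬝ᵥ W *ᵥ x ≤ L * (x ⬝ᵥ x) := by
  set U : Matrix ι ι ℝ := (hW.eigenvectorUnitary : Matrix ι ι ℝ)
  have hUU : U * Uᵀ = 1 := by
    simpa [U, star_eq_conjTranspose] using
      Unitary.mul_star_self_of_mem hW.eigenvectorUnitary.2
  have hW_eq : W = U * diagonal hW.eigenvalues * Uᵀ := by
    conv_lhs => rw [hW.spectral_theorem]
    simp [Unitary.conjStarAlgAut_apply, U, star_eq_conjTranspose]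
  set y := Uᵀ *ᵥ x
  have hxx : x ⬝ᵥ x = y ⬝ᵥ y := by
    rw [dotProduct_mulVec, vecMul_transpose, mulVec_mulVec, hUU, one_mulVec]
  rw [hW_eq, ← mulVec_mulVec, ← mulVec_mulVec, dotProduct_mulVec, ← mulVec_transpose, hxx,
    dotProduct, dotProduct, mul_sum]
  exact sum_le_sum fun i _ => by
    rw [mulVec_diagonal]; nlinarith [mul_self_nonneg (y i), hL i]

/-- The right-hand side of the paper's system (5.2)–(5.3), with `κ = β c`. -/
def upperBoundField (W : Matrix ι ι ℝ) (κ δ : ℝ) (x : ι → ℝ) : ι → ℝ :=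
  fun i => κ * (W *ᵥ x) i * (1 - x i) - δ * x i

section UpperBoundField

variable {W : Matrix ι ι ℝ} {κ δ : ℝ}

theorem dotProduct_upperBoundField_le (hW : ∀ i j, 0 ≤ W i j) (hκ : 0 ≤ κ) {x : ι → ℝ}
    (hx : 0 ≤ x) :
    x ⬝ᵥ upperBoundField W κ δ x ≤ κ * (x ⬝ᵥ W *ᵥ x) - δ * (x ⬝ᵥ x) := by
  simp only [dotProduct, mul_sum, ← sum_sub_distrib]
  refine sum_le_sum fun i _ => ?_
  have hWx : 0 ≤ (W *ᵥ x) i := sum_nonneg fun j _ => mul_nonneg (hW i j) (hx j)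
  have := mul_nonneg (mul_nonneg hκ hWx) (mul_self_nonneg (x i))
  simp only [upperBoundField]
  linarith

theorem min_zero_dotProduct_upperBoundField_le (hW : ∀ i j, 0 ≤ W i j) (hκ : 0 ≤ κ)
    (hδ : 0 ≤ δ) {x : ι → ℝ} {R : ℝ} (hR : ‖x‖ ≤ R) :
    (fun i => min (x i) 0) ⬝ᵥ upperBoundField W κ δ x ≤
      κ * (1 + R) * ((fun i => min (x i) 0) ⬝ᵥ W *ᵥ fun i => min (x i) 0) := by
  set m : ι → ℝ := fun i => min (x i) 0
  simp only [dotProduct, mul_sum]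
  refine sum_le_sum fun i _ => ?_
  have hm_nonpos : ∀ j, m j ≤ 0 := fun j => min_le_right _ _
  have hmx : m i * x i = m i * m i := by
    rcases min_cases (x i) 0 with h | h <;> simp only [m, h.1, zero_mul]
  have hmR : -R ≤ m i := le_min (neg_le_of_abs_le ((norm_le_pi_norm x i).trans hR))
    (by linarith [norm_nonneg x])
  have hWm : (W *ᵥ m) i ≤ (W *ᵥ x) i :=
    sum_le_sum fun j _ => mul_le_mul_of_nonneg_left (min_le_left _ _) (hW i j)
  have hWm_nonpos : (W *ᵥ m) i ≤ 0 :=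
    sum_nonpos fun j _ => mul_nonpos_of_nonneg_of_nonpos (hW i j) (hm_nonpos j)
  have hq : m i * (1 - m i) ≤ 0 :=
    mul_nonpos_of_nonpos_of_nonneg (hm_nonpos i) (by linarith [hm_nonpos i])
  calc m i * upperBoundField W κ δ x i
      = κ * ((W *ᵥ x) i * (m i * (1 - m i))) - δ * (m i * m i) := by
        simp only [upperBoundField]; linear_combination (-(κ * (W *ᵥ x) i) - δ) * hmx
    _ ≤ κ * ((W *ᵥ m) i * (m i * (1 - m i))) := by
        nlinarith [mul_nonpos_of_nonneg_of_nonpos (mul_nonneg hκ (sub_nonneg.2 hWm)) hq,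
          mul_nonneg hδ (mul_self_nonneg (m i))]
    _ ≤ κ * (1 + R) * (m i * (W *ᵥ m) i) := by
        nlinarith [mul_nonneg
          (mul_nonneg hκ (mul_nonneg_of_nonpos_of_nonpos hWm_nonpos (hm_nonpos i)))
          (by linarith : 0 ≤ (1 + R) - (1 - m i))]

theorem nonneg_of_hasDerivAt_upperBoundField [DecidableEq ι] (hW : W.IsHermitian)
    (hW_nonneg : ∀ i j, 0 ≤ W i j) (hκ : 0 ≤ κ) (hδ : 0 ≤ δ) {p : ℝ → ι → ℝ}
    (hp : ∀ t, 0 ≤ t → HasDerivAt p (upperBoundField W κ δ (p t)) t) (h0 : 0 ≤ p 0)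
    {t : ℝ} (ht : 0 ≤ t) : 0 ≤ p t := by
  -- the drift of the negative part is cubic; a bound on `[0, t]` makes it linear there
  obtain ⟨C, hC⟩ := (isCompact_Icc (a := (0 : ℝ)) (b := t)).exists_bound_of_continuousOn
    fun s hs => (hp s hs.1).continuousAt.continuousWithinAt
  have hC_nonneg : 0 ≤ C := (norm_nonneg _).trans (hC 0 ⟨le_rfl, ht⟩)
  obtain ⟨L, hL⟩ := (Set.finite_range hW.eigenvalues).bddAbove
  set m : ℝ → ι → ℝ := fun s i => min (p s i) 0
  have hm0 : m 0 = 0 := funext fun i => min_eq_right (h0 i)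
  have hgronwall := le_mul_exp_of_hasDerivAt_le (f := fun s => m s ⬝ᵥ m s)
    (K := 2 * (κ * (1 + C) * L)) ht (fun s hs => (hp s hs.1).dotProduct_min_zero_self)
    fun s hs => by
      have hRayleigh := mul_le_mul_of_nonneg_left
        (hW.dotProduct_mulVec_le (fun i => hL ⟨i, rfl⟩) (m s))
        (by positivity : 0 ≤ κ * (1 + C))
      have hdrift := min_zero_dotProduct_upperBoundField_le hW_nonneg hκ hδ
        (hC s (Ico_subset_Icc_self hs))
      linarith
  have hmt : m t = 0 := dotProduct_self_eq_zero.1 <| le_antisymm (by simpa [hm0] using hgronwall)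
    (sum_nonneg fun i _ => mul_self_nonneg _)
  exact fun i => min_eq_right_iff.1 (congrFun hmt i)

end UpperBoundField

theorem tendsto_zero_of_dotProduct_self_le_exp {p : ℝ → ι → ℝ} {C K : ℝ} (hK : K < 0)
    (hp : ∀ᶠ t in atTop, p t ⬝ᵥ p t ≤ C * exp (K * t)) : Tendsto p atTop (𝓝 0) := by
  have hbound : Tendsto (fun t => √(C * exp (K * t))) atTop (𝓝 0) := by
    simpa using ((tendsto_exp_atBot.comp
      ((tendsto_const_mul_atBot_of_neg hK).2 tendsto_id)).const_mul C).sqrt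
  refine tendsto_pi_nhds.2 fun i => squeeze_zero_norm' (hp.mono fun t ht => ?_) hbound
  rw [Real.norm_eq_abs]
  exact Real.abs_le_sqrt <| (sq (p t i)).trans_le <| .trans
    (single_le_sum (f := fun j => p t j * p t j) (fun j _ => mul_self_nonneg _) (mem_univ i)) ht

/-- Spectral vanishing condition for the linear-rate upper-bound system: if `W` is a
symmetric nonnegative matrix and `β c λ(W) < δ`, then every solution of
`p_i' = β c (∑_j W_{ij} p_j)(1 − p_i) − δ p_i` with initial data in `[0,1]^n`
converges to the origin. -/
theorem linear_upper_bound_global_stability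
    (n : ℕ) (hn : 0 < n) (W : Matrix (Fin n) (Fin n) ℝ)
    (hW : W.IsHermitian) (hWnonneg : ∀ i j, 0 ≤ W i j)
    (β δ c : ℝ) (hβ : 0 < β) (hδ : 0 < δ) (hc : 0 < c)
    (hspec : β * c * (Finset.univ.sup' (by simpa using Finset.univ_nonempty_iff.mpr (Fin.pos_iff_nonempty.mp hn)) hW.eigenvalues) < δ)
    (p : ℝ → Fin n → ℝ)
    (hsol : ∀ t : ℝ, 0 ≤ t →
      HasDerivAt p (fun i => β * c * (∑ j, W i j * p t j) * (1 - p t i) - δ * p t i) t)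
    (hinit : ∀ i, p 0 i ∈ Set.Icc (0 : ℝ) 1) :
    Tendsto p atTop (nhds 0) := by
  have hκ : 0 ≤ β * c := by positivity
  have hp : ∀ t, 0 ≤ t → HasDerivAt p (upperBoundField W (β * c) δ (p t)) t := hsol
  have hp_nonneg : ∀ t, 0 ≤ t → 0 ≤ p t := fun t =>
    nonneg_of_hasDerivAt_upperBoundField hW hWnonneg hκ hδ.le hp fun i => (hinit i).1
  obtain ⟨L, hL, hLδ⟩ : ∃ L, (∀ i, hW.eigenvalues i ≤ L) ∧ β * c * L < δ :=
    ⟨_, fun i => Finset.le_sup' hW.eigenvalues (mem_univ i), hspec⟩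
  have hdecay : ∀ t, 0 ≤ t → p t ⬝ᵥ p t ≤ (p 0 ⬝ᵥ p 0) * exp (2 * (β * c * L - δ) * t) := by
    intro t ht
    simpa using le_mul_exp_of_hasDerivAt_le ht (fun s hs => (hp s hs.1).dotProduct_self)
      fun s hs => by
        have hRayleigh := mul_le_mul_of_nonneg_left (hW.dotProduct_mulVec_le hL (p s)) hκ
        have hdrift := dotProduct_upperBoundField_le (δ := δ) hWnonneg hκ (hp_nonneg s hs.1)
        linarith
  exact tendsto_zero_of_dotProduct_self_le_exp (by linarith)
    ((eventually_ge_atTop 0).mono hdecay)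
end

section
/- Let f : ℕ → ℝ be concave with f(0) = 0 and f nonnegative. If β f(1) λ(W) / δ < 1, then the origin is a globally asymptotically stable equilibrium (on [0,1]^n) of the mean field hypergraph SIS system dp_i/dt = β ∑_k ∑_{h∈C_k} I_{ih} (∑_{l=1}^k f(l) Ψ(h,l))(1 − p_i) − δ p_i. -/
open Finset Filter

/-- `Ψ(h,l)` for a hyperedge `e`: probability that exactly `l` nodes of `e` are infected,
under independence. -/
noncomputable def PsiE {n : ℕ} (e : Finset (Fin n)) (P : Fin n → ℝ) (l : ℕ) : ℝ :=
  ∑ J ∈ e.powersetCard l, (∏ j ∈ J, P j) * ∏ j ∈ e \ J, (1 - P j)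

/-- The hyperedge of column `h` of the incidence matrix `Inc`. -/
def edgeOf {n m : ℕ} (Inc : Fin n → Fin m → ℕ) (h : Fin m) : Finset (Fin n) :=
  Finset.univ.filter (fun j => Inc j h = 1)

/-- The mean field vector field
`g_i(P) = β ∑_h I_{ih} (∑_{l=1}^{|h|} f(l) Ψ(h,l)) (1 − p_i) − δ p_i`. -/
noncomputable def meanFieldG (n m : ℕ) (Inc : Fin n → Fin m → ℕ) (β δ : ℝ) (f : ℕ → ℝ)
    (P : Fin n → ℝ) : Fin n → ℝ := fun i =>
  β * (∑ h : Fin m, (Inc i h : ℝ) *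
      ∑ l ∈ Finset.Icc 1 (edgeOf Inc h).card, f l * PsiE (edgeOf Inc h) P l) * (1 - P i)
    - δ * P i

/-- `p` solves the mean field ODE system on `[0,∞)`. -/
def IsMFSolution (n m : ℕ) (Inc : Fin n → Fin m → ℕ) (β δ : ℝ) (f : ℕ → ℝ)
    (p : ℝ → Fin n → ℝ) : Prop :=
  ∀ t : ℝ, 0 ≤ t → HasDerivAt p (meanFieldG n m Inc β δ f (p t)) t


section MFAux

open Matrix

noncomputable def cl (x : ℝ) : ℝ := max 0 (min x 1)
noncomputable def dl (x : ℝ) : ℝ := x - cl x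

lemma cl_nonneg (x : ℝ) : 0 ≤ cl x := le_max_left _ _
lemma cl_le_one (x : ℝ) : cl x ≤ 1 := max_le zero_le_one (min_le_right _ _)
lemma cl_of_mem {x : ℝ} (h0 : 0 ≤ x) (h1 : x ≤ 1) : cl x = x := by
  unfold cl; rw [min_eq_left h1, max_eq_right h0]
lemma cl_of_neg {x : ℝ} (h : x < 0) : cl x = 0 := by
  unfold cl; rw [min_eq_left (by linarith), max_eq_left h.le]
lemma cl_of_gt {x : ℝ} (h : 1 < x) : cl x = 1 := by
  unfold cl; rw [min_eq_right h.le, max_eq_right zero_le_one]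
lemma dl_of_mem {x : ℝ} (h0 : 0 ≤ x) (h1 : x ≤ 1) : dl x = 0 := by
  rw [dl, cl_of_mem h0 h1, sub_self]
lemma mem_of_dl_eq_zero {x : ℝ} (h : dl x = 0) : 0 ≤ x ∧ x ≤ 1 := by
  rcases lt_or_ge x 0 with hx | hx
  · rw [dl, cl_of_neg hx, sub_zero] at h; exact absurd h hx.ne
  rcases le_or_gt x 1 with hx1 | hx1
  · exact ⟨hx, hx1⟩
  · rw [dl, cl_of_gt hx1] at h; exfalso; linarith [sub_eq_zero.mp h]
lemma abs_dl_le {x y : ℝ} (h0 : 0 ≤ y) (h1 : y ≤ 1) : |dl x| ≤ |x - y| := by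
  rcases lt_or_ge x 0 with hx | hx
  · rw [dl, cl_of_neg hx, sub_zero, abs_of_neg hx, abs_of_neg (by linarith : x - y < 0)]
    linarith
  rcases le_or_gt x 1 with hx1 | hx1
  · rw [dl_of_mem hx hx1, abs_zero]; positivity
  · rw [dl, cl_of_gt hx1, abs_of_pos (by linarith : (0:ℝ) < x - 1),
      abs_of_pos (by linarith : (0:ℝ) < x - y)]
    linarith

lemma hasDerivAt_dlsq (x : ℝ) : HasDerivAt (fun y => dl y ^ 2) (2 * dl x) x := by
  rcases lt_or_ge x 0 with hx | hx
  · have h1 : HasDerivAt (fun y : ℝ => y ^ 2) (2 * x) x := by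
      simpa using hasDerivAt_pow 2 x
    have heq : (fun y => dl y ^ 2) =ᶠ[nhds x] fun y : ℝ => y ^ 2 := by
      filter_upwards [Iio_mem_nhds hx] with y hy
      rw [dl, cl_of_neg hy, sub_zero]
    have : HasDerivAt (fun y => dl y ^ 2) (2 * x) x := h1.congr_of_eventuallyEq heq
    simpa [dl, cl_of_neg hx] using this
  rcases le_or_gt x 1 with hx1 | hx1
  · have hdx : dl x = 0 := dl_of_mem hx hx1
    rw [hdx, mul_zero, hasDerivAt_iff_isLittleO, Asymptotics.isLittleO_iff]
    intro c hc
    filter_upwards [Metric.closedBall_mem_nhds x hc] with y hy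
    have h1 : |dl y| ≤ |y - x| := abs_dl_le hx hx1
    have h2 : |y - x| ≤ c := by
      rw [← Real.dist_eq]; exact Metric.mem_closedBall.mp hy
    have : |dl y| * |dl y| ≤ c * |y - x| := by
      calc |dl y| * |dl y| ≤ |y - x| * |y - x| :=
            mul_le_mul h1 h1 (abs_nonneg _) (abs_nonneg _)
        _ ≤ c * |y - x| := by
            exact mul_le_mul_of_nonneg_right h2 (abs_nonneg _)
    simpa [hdx, Real.norm_eq_abs, abs_pow, sq, abs_mul] using this
  · have h1 : HasDerivAt (fun y : ℝ => (y - 1) ^ 2) (2 * (x - 1)) x := by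
      have := ((hasDerivAt_id x).sub_const 1).fun_pow 2
      simpa using this
    have heq : (fun y => dl y ^ 2) =ᶠ[nhds x] fun y : ℝ => (y - 1) ^ 2 := by
      filter_upwards [Ioi_mem_nhds hx1] with y hy
      rw [dl, cl_of_gt hy]
    have := h1.congr_of_eventuallyEq heq
    simpa [dl, cl_of_gt hx1] using this

lemma sum_prod_one {n : ℕ} (s : Finset (Fin n)) (P : Fin n → ℝ) :
    ∑ J ∈ s.powerset, (∏ j ∈ J, P j) * ∏ j ∈ s \ J, (1 - P j) = 1 := by
  rw [← Finset.prod_add]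
  simp

lemma sum_card_mul {n : ℕ} (s : Finset (Fin n)) (P : Fin n → ℝ) :
    ∑ J ∈ s.powerset, (J.card : ℝ) * ((∏ j ∈ J, P j) * ∏ j ∈ s \ J, (1 - P j))
      = ∑ j ∈ s, P j := by
  classical
  induction s using Finset.induction_on with
  | empty => simp
  | insert _ _ ha =>
    rename_i a s ih
    rw [Finset.sum_powerset_insert ha, Finset.sum_insert ha]
    have h1 : ∀ J ∈ s.powerset,
        ((J.card : ℝ) * ((∏ j ∈ J, P j) * ∏ j ∈ insert a s \ J, (1 - P j)))
        = (1 - P a) * ((J.card : ℝ) * ((∏ j ∈ J, P j) * ∏ j ∈ s \ J, (1 - P j))) := by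
      intro J hJ
      have hJs : J ⊆ s := Finset.mem_powerset.mp hJ
      have haJ : a ∉ J := fun h => ha (hJs h)
      have : insert a s \ J = insert a (s \ J) := by
        ext x
        simp only [Finset.mem_sdiff, Finset.mem_insert]
        constructor
        · rintro ⟨hx | hx, hxJ⟩
          · exact Or.inl hx
          · exact Or.inr ⟨hx, hxJ⟩
        · rintro (rfl | ⟨hx, hxJ⟩)
          · exact ⟨Or.inl rfl, haJ⟩
          · exact ⟨Or.inr hx, hxJ⟩
      rw [this, Finset.prod_insert (fun h => ha ((Finset.sdiff_subset) h))]
      ring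
    have h2 : ∀ J ∈ s.powerset,
        (((insert a J).card : ℝ) * ((∏ j ∈ insert a J, P j) * ∏ j ∈ insert a s \ insert a J, (1 - P j)))
        = P a * (((J.card : ℝ) + 1) * ((∏ j ∈ J, P j) * ∏ j ∈ s \ J, (1 - P j))) := by
      intro J hJ
      have hJs : J ⊆ s := Finset.mem_powerset.mp hJ
      have haJ : a ∉ J := fun h => ha (hJs h)
      have hset : insert a s \ insert a J = s \ J := by
        ext x
        simp only [Finset.mem_sdiff, Finset.mem_insert, not_or]
        constructor
        · rintro ⟨hx | hx, hxa, hxJ⟩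
          · exact absurd hx hxa
          · exact ⟨hx, hxJ⟩
        · rintro ⟨hx, hxJ⟩
          exact ⟨Or.inr hx, fun h => ha (h ▸ hx), hxJ⟩
      rw [hset, Finset.card_insert_of_notMem haJ, Finset.prod_insert haJ]
      push_cast
      ring
    rw [Finset.sum_congr rfl h1, Finset.sum_congr rfl h2, ← Finset.mul_sum, ← Finset.mul_sum, ih]
    have h3 : ∑ J ∈ s.powerset, (((J.card : ℝ) + 1) * ((∏ j ∈ J, P j) * ∏ j ∈ s \ J, (1 - P j)))
        = (∑ j ∈ s, P j) + 1 := by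
      have : ∀ J ∈ s.powerset, (((J.card : ℝ) + 1) * ((∏ j ∈ J, P j) * ∏ j ∈ s \ J, (1 - P j)))
          = (J.card : ℝ) * ((∏ j ∈ J, P j) * ∏ j ∈ s \ J, (1 - P j))
            + ((∏ j ∈ J, P j) * ∏ j ∈ s \ J, (1 - P j)) := by intro J _; ring
      rw [Finset.sum_congr rfl this, Finset.sum_add_distrib, ih, sum_prod_one]
    rw [h3]
    ring

lemma sum_l_psi {n : ℕ} (e : Finset (Fin n)) (P : Fin n → ℝ) :
    ∑ l ∈ Finset.Icc 1 e.card, (l : ℝ) * PsiE e P l = ∑ j ∈ e, P j := by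
  classical
  have h0 : ∑ l ∈ Finset.range (e.card + 1), (l : ℝ) * PsiE e P l = ∑ j ∈ e, P j := by
    rw [← sum_card_mul e P, Finset.sum_powerset]
    refine Finset.sum_congr rfl fun l _ => ?_
    rw [PsiE, Finset.mul_sum]
    refine Finset.sum_congr rfl fun J hJ => ?_
    rw [(Finset.mem_powersetCard.mp hJ).2]
  rw [← h0]
  apply Finset.sum_subset
  · intro l hl
    rw [Finset.mem_Icc] at hl
    exact Finset.mem_range.mpr (Nat.lt_succ_of_le hl.2)
  · intro l hl hl'
    rw [Finset.mem_range] at hl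
    rw [Finset.mem_Icc] at hl'
    have : l = 0 := by omega
    simp [this]

lemma PsiE_nonneg {n : ℕ} (e : Finset (Fin n)) (P : Fin n → ℝ) (l : ℕ)
    (hP : ∀ j, 0 ≤ P j ∧ P j ≤ 1) : 0 ≤ PsiE e P l := by
  refine Finset.sum_nonneg fun J _ => mul_nonneg ?_ ?_
  · exact Finset.prod_nonneg fun j _ => (hP j).1
  · exact Finset.prod_nonneg fun j _ => by linarith [(hP j).2]

lemma f_le_mul {f : ℕ → ℝ} (hconc : ∀ k : ℕ, 1 ≤ k → f (k + 1) - f k ≤ f k - f (k - 1))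
    (hf0 : f 0 = 0) : ∀ l : ℕ, f l ≤ l * f 1 := by
  have incr : ∀ k : ℕ, f (k + 1) - f k ≤ f 1 := by
    intro k
    induction k with
    | zero => simp [hf0]
    | succ k ih =>
      have h := hconc (k + 1) (Nat.le_add_left 1 k)
      simp only [Nat.add_sub_cancel] at h
      linarith
  intro l
  induction l with
  | zero => simp [hf0]
  | succ l ih =>
    have := incr l
    push_cast
    push_cast at ih
    linarith

lemma rayleigh_bound {n : ℕ} (H : (Finset.univ : Finset (Fin n)).Nonempty)
    (W : Matrix (Fin n) (Fin n) ℝ) (hW : W.IsHermitian) (x : Fin n → ℝ) :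
    x ⬝ᵥ (W *ᵥ x) ≤ (Finset.univ.sup' H hW.eigenvalues) * (x ⬝ᵥ x) := by
  classical
  set b := hW.eigenvectorBasis with hb
  set x' : EuclideanSpace ℝ (Fin n) := WithLp.toLp 2 x with hx'
  have hinner : ∀ u w : EuclideanSpace ℝ (Fin n), inner ℝ u w = ⇑u ⬝ᵥ ⇑w := by
    intro u w
    simp [PiLp.inner_apply, dotProduct, mul_comm]
  have hcoe : ⇑x' = x := rfl
  -- coefficients
  set c : Fin n → ℝ := fun j => inner ℝ x' (b j) with hc
  -- (b) : ⟪b j, W *ᵥ x⟫ = eig j * c j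
  have hWsymm : W.transpose = W := by
    have := hW.eq
    rwa [Matrix.conjTranspose_eq_transpose_of_trivial] at this
  have key : ∀ j, ⇑(b j) ⬝ᵥ (W *ᵥ x) = hW.eigenvalues j * c j := by
    intro j
    have h1 : ⇑(b j) ⬝ᵥ (W *ᵥ x) = (W *ᵥ ⇑(b j)) ⬝ᵥ x := by
      rw [Matrix.dotProduct_mulVec, ← Matrix.mulVec_transpose, hWsymm]
    rw [h1, hW.mulVec_eigenvectorBasis, smul_dotProduct, smul_eq_mul]
    congr 1
  -- expansion of dot products via sum_inner_mul_inner
  have hxx : x ⬝ᵥ x = ∑ j, c j * c j := by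
    have := b.sum_inner_mul_inner x' x'
    rw [hinner x' x', hcoe] at this
    rw [← this]
    refine Finset.sum_congr rfl fun j _ => ?_
    have hcj : c j = inner ℝ x' (b j) := rfl
    rw [hcj, real_inner_comm x' (b j)]
  have hxWx : x ⬝ᵥ (W *ᵥ x) = ∑ j, hW.eigenvalues j * (c j * c j) := by
    set y' : EuclideanSpace ℝ (Fin n) := WithLp.toLp 2 (W *ᵥ x) with hy'
    have := b.sum_inner_mul_inner x' y'
    rw [hinner x' y'] at this
    have hcy : ⇑y' = W *ᵥ x := rfl
    rw [hcy, hcoe] at this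
    rw [← this]
    refine Finset.sum_congr rfl fun j _ => ?_
    have h2 : inner ℝ (b j) y' = hW.eigenvalues j * c j := by
      rw [hinner, hcy]
      exact key j
    rw [h2]
    ring
  rw [hxWx, hxx, Finset.mul_sum]
  refine Finset.sum_le_sum fun j _ => ?_
  have h3 : hW.eigenvalues j ≤ Finset.univ.sup' H hW.eigenvalues :=
    Finset.le_sup' _ (Finset.mem_univ j)
  exact mul_le_mul_of_nonneg_right h3 (mul_self_nonneg _)

lemma contDiff_PsiE {n : ℕ} (e : Finset (Fin n)) (l : ℕ) :
    ContDiff ℝ 1 (fun P : Fin n → ℝ => PsiE e P l) := by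
  unfold PsiE
  refine ContDiff.sum fun J _ => ContDiff.mul ?_ ?_
  · exact contDiff_prod fun j _ => contDiff_apply ℝ ℝ j
  · exact contDiff_prod fun j _ => contDiff_const.sub (contDiff_apply ℝ ℝ j)

lemma contDiff_meanFieldG (n m : ℕ) (Inc : Fin n → Fin m → ℕ) (β δ : ℝ) (f : ℕ → ℝ) :
    ContDiff ℝ 1 (meanFieldG n m Inc β δ f) := by
  rw [contDiff_pi]
  intro i
  unfold meanFieldG
  refine ContDiff.sub (ContDiff.mul (ContDiff.mul contDiff_const ?_)
    (contDiff_const.sub (contDiff_apply ℝ ℝ i))) (contDiff_const.mul (contDiff_apply ℝ ℝ i))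
  refine ContDiff.sum fun h _ => contDiff_const.mul ?_
  exact ContDiff.sum fun l _ => contDiff_const.mul (contDiff_PsiE _ _)

lemma lipschitz_on_compact {n : ℕ} {g : (Fin n → ℝ) → (Fin n → ℝ)} (hg : ContDiff ℝ 1 g)
    {s : Set (Fin n → ℝ)} (hsc : IsCompact s) (hconv : Convex ℝ s) :
    ∃ L : ℝ, 0 ≤ L ∧ ∀ x ∈ s, ∀ y ∈ s, ‖g x - g y‖ ≤ L * ‖x - y‖ := by
  have hfd : Continuous fun x => fderiv ℝ g x := (hg.continuous_fderiv one_ne_zero)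
  have hcont : ContinuousOn (fun x => ‖fderiv ℝ g x‖) s :=
    (continuous_norm.comp hfd).continuousOn
  rcases hsc.exists_bound_of_continuousOn hcont with ⟨C, hC⟩
  have hC' : ∀ x ∈ s, ‖fderiv ℝ g x‖ ≤ max C 0 := by
    intro x hx
    calc ‖fderiv ℝ g x‖ = ‖‖fderiv ℝ g x‖‖ := (norm_norm _).symm
      _ ≤ C := hC x hx
      _ ≤ max C 0 := le_max_left _ _
  refine ⟨max C 0, le_max_right _ _, ?_⟩
  have hlip : LipschitzOnWith (Real.toNNReal (max C 0)) g s := by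
    refine hconv.lipschitzOnWith_of_nnnorm_fderiv_le
      (fun x _ => hg.differentiable one_ne_zero x) ?_
    intro x hx
    have h1 : (‖fderiv ℝ g x‖₊ : ℝ) ≤ max C 0 := hC' x hx
    exact NNReal.le_toNNReal_of_coe_le h1
  intro x hx y hy
  have := hlip.dist_le_mul x hx y hy
  rw [dist_eq_norm, dist_eq_norm] at this
  calc ‖g x - g y‖ ≤ (Real.toNNReal (max C 0) : ℝ) * ‖x - y‖ := this
    _ = max C 0 * ‖x - y‖ := by rw [Real.coe_toNNReal _ (le_max_right _ _)]

lemma weight_nonneg {n : ℕ} {f : ℕ → ℝ} (hnonneg : ∀ k, 0 ≤ f k)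
    (e : Finset (Fin n)) {P : Fin n → ℝ} (hP : ∀ j, 0 ≤ P j ∧ P j ≤ 1) :
    0 ≤ ∑ l ∈ Finset.Icc 1 e.card, f l * PsiE e P l :=
  Finset.sum_nonneg fun l _ => mul_nonneg (hnonneg l) (PsiE_nonneg e P l hP)

lemma weight_le {n : ℕ} {f : ℕ → ℝ}
    (hconc : ∀ k : ℕ, 1 ≤ k → f (k + 1) - f k ≤ f k - f (k - 1))
    (hf0 : f 0 = 0) (hnonneg : ∀ k, 0 ≤ f k)
    (e : Finset (Fin n)) {P : Fin n → ℝ} (hP : ∀ j, 0 ≤ P j ∧ P j ≤ 1) :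
    ∑ l ∈ Finset.Icc 1 e.card, f l * PsiE e P l ≤ f 1 * ∑ j ∈ e, P j := by
  calc ∑ l ∈ Finset.Icc 1 e.card, f l * PsiE e P l
      ≤ ∑ l ∈ Finset.Icc 1 e.card, ((l : ℝ) * f 1) * PsiE e P l := by
        refine Finset.sum_le_sum fun l _ => ?_
        exact mul_le_mul_of_nonneg_right (f_le_mul hconc hf0 l) (PsiE_nonneg e P l hP)
    _ = f 1 * ∑ l ∈ Finset.Icc 1 e.card, (l : ℝ) * PsiE e P l := by
        rw [Finset.mul_sum]; refine Finset.sum_congr rfl fun l _ => by ring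
    _ = f 1 * ∑ j ∈ e, P j := by rw [sum_l_psi]

lemma edge_sum {n m : ℕ} {Inc : Fin n → Fin m → ℕ}
    (hInc : ∀ i h, Inc i h = 0 ∨ Inc i h = 1) (h : Fin m) (P : Fin n → ℝ) :
    ∑ j ∈ edgeOf Inc h, P j = ∑ j : Fin n, (Inc j h : ℝ) * P j := by
  rw [edgeOf, Finset.sum_filter]
  refine Finset.sum_congr rfl fun j _ => ?_
  rcases hInc j h with h0 | h1
  · simp [h0]
  · simp [h1]

end MFAux

/-- Global asymptotic stability for a collective suppression (concave) model: if `f` is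
concave, nonnegative, `f 0 = 0` and `β f(1) λ(W)/δ < 1`, then every solution of the mean
field hypergraph SIS system with initial data in `[0,1]^n` converges to the origin. -/
theorem meanField_global_stability_concave
    (n m : ℕ) (hn : 0 < n) (Inc : Fin n → Fin m → ℕ)
    (hInc : ∀ i h, Inc i h = 0 ∨ Inc i h = 1)
    (β δ : ℝ) (hβ : 0 < β) (hδ : 0 < δ) (f : ℕ → ℝ)
    (hconc : ∀ k : ℕ, 1 ≤ k → f (k + 1) - f k ≤ f k - f (k - 1))
    (hf0 : f 0 = 0) (hnonneg : ∀ k, 0 ≤ f k)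
    (W : Matrix (Fin n) (Fin n) ℝ)
    (hWdef : ∀ i j, W i j = ((∑ h, Inc i h * Inc j h : ℕ) : ℝ))
    (hW : W.IsHermitian)
    (hspec : β * f 1 *
        (Finset.univ.sup'
          (by simpa using Finset.univ_nonempty_iff.mpr (Fin.pos_iff_nonempty.mp hn))
          hW.eigenvalues) / δ < 1)
    (p : ℝ → Fin n → ℝ) (hsol : IsMFSolution n m Inc β δ f p)
    (hinit : ∀ i, p 0 i ∈ Set.Icc (0 : ℝ) 1) :
    Tendsto p atTop (nhds 0) := by
  classical
  have H : (Finset.univ : Finset (Fin n)).Nonempty := by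
    simpa using Finset.univ_nonempty_iff.mpr (Fin.pos_iff_nonempty.mp hn)
  set g : (Fin n → ℝ) → (Fin n → ℝ) := meanFieldG n m Inc β δ f with hgdef
  have hderiv : ∀ t : ℝ, 0 ≤ t → ∀ i, HasDerivAt (fun s => p s i) (g (p t) i) t := by
    intro t ht i
    have h := hsol t ht
    exact (ContinuousLinearMap.proj i (R := ℝ)
      (φ := fun _ : Fin n => ℝ)).hasFDerivAt.comp_hasDerivAt t h
  have hpcont : ∀ t : ℝ, 0 ≤ t → ContinuousAt p t := fun t ht => (hsol t ht).continuousAt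
  have hgformula : ∀ P : Fin n → ℝ, ∀ i, g P i =
      β * (∑ h : Fin m, (Inc i h : ℝ) *
        ∑ l ∈ Finset.Icc 1 (edgeOf Inc h).card, f l * PsiE (edgeOf Inc h) P l) * (1 - P i)
        - δ * P i := fun P i => rfl
  have hA_nonneg : ∀ P : Fin n → ℝ, (∀ j, 0 ≤ P j ∧ P j ≤ 1) → ∀ i,
      0 ≤ ∑ h : Fin m, (Inc i h : ℝ) *
        ∑ l ∈ Finset.Icc 1 (edgeOf Inc h).card, f l * PsiE (edgeOf Inc h) P l := by
    intro P hP i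
    refine Finset.sum_nonneg fun h _ => mul_nonneg (Nat.cast_nonneg _) ?_
    exact weight_nonneg hnonneg _ hP
  set q : (Fin n → ℝ) → (Fin n → ℝ) := fun P i => cl (P i) with hqdef
  have hqbox : ∀ P : Fin n → ℝ, ∀ j, 0 ≤ q P j ∧ q P j ≤ 1 :=
    fun P j => ⟨cl_nonneg _, cl_le_one _⟩
  have hsign : ∀ P : Fin n → ℝ, ∀ i, dl (P i) * g (q P) i ≤ 0 := by
    intro P i
    rcases lt_or_ge (P i) 0 with hx | hx
    · have hq : q P i = 0 := cl_of_neg hx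
      have hdl : dl (P i) = P i := by rw [dl, cl_of_neg hx, sub_zero]
      have hg0 : 0 ≤ g (q P) i := by
        rw [hgformula, hq]
        have h1 := hA_nonneg (q P) (hqbox P) i
        have hb : 0 ≤ β * (∑ h : Fin m, (Inc i h : ℝ) *
            ∑ l ∈ Finset.Icc 1 (edgeOf Inc h).card, f l * PsiE (edgeOf Inc h) (q P) l) :=
          mul_nonneg hβ.le h1
        simpa using hb
      rw [hdl]
      exact mul_nonpos_of_nonpos_of_nonneg hx.le hg0
    rcases le_or_gt (P i) 1 with hx1 | hx1
    · rw [dl_of_mem hx hx1, zero_mul]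
    · have hq : q P i = 1 := cl_of_gt hx1
      have hdl : dl (P i) = P i - 1 := by rw [dl, cl_of_gt hx1]
      have hg0 : g (q P) i ≤ 0 := by
        rw [hgformula, hq]
        simp [hδ.le]
      have hdlpos : 0 ≤ dl (P i) := by rw [hdl]; linarith
      exact mul_nonpos_of_nonneg_of_nonpos hdlpos hg0
  obtain ⟨L, hL0, hLip⟩ := lipschitz_on_compact (contDiff_meanFieldG n m Inc β δ f)
    (isCompact_Icc (a := fun _ : Fin n => (-1:ℝ)) (b := fun _ => (2:ℝ))) (convex_Icc _ _)
  have hmemK : ∀ P : Fin n → ℝ, (∀ i, -1 ≤ P i ∧ P i ≤ 2) →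
      P ∈ Set.Icc (fun _ : Fin n => (-1:ℝ)) (fun _ => (2:ℝ)) := by
    intro P hP
    constructor <;> intro i
    · exact (hP i).1
    · exact (hP i).2
  set V : ℝ → ℝ := fun t => ∑ i, dl (p t i) ^ 2 with hVdef
  have hVderiv : ∀ t : ℝ, 0 ≤ t →
      HasDerivAt V (∑ i, 2 * dl (p t i) * g (p t) i) t := by
    intro t ht
    refine HasDerivAt.fun_sum fun i _ => ?_
    have h1 := (hasDerivAt_dlsq (p t i)).comp t (hderiv t ht i)
    simpa [mul_assoc, Function.comp_def] using h1
  have hVnonneg : ∀ t, 0 ≤ V t := fun t => Finset.sum_nonneg fun i _ => sq_nonneg _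
  have key : ∀ τ b : ℝ, 0 ≤ τ → τ ≤ b → (∀ i, 0 ≤ p τ i ∧ p τ i ≤ 1) →
      (∀ s ∈ Set.Icc τ b, ∀ i, -1 ≤ p s i ∧ p s i ≤ 2) →
      ∀ s ∈ Set.Icc τ b, ∀ i, 0 ≤ p s i ∧ p s i ≤ 1 := by
    intro τ b hτ0 hτb hboxτ hK
    set Kc : ℝ := 2 * L * n with hKc
    have main : ∀ x ∈ Set.Icc τ b, V x ≤ gronwallBound 0 Kc 0 (x - τ) := by
      apply le_gronwallBound_of_liminf_deriv_right_le
        (f' := fun s => ∑ i, 2 * dl (p s i) * g (p s) i)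
      · intro x hx
        exact ((hVderiv x (le_trans hτ0 hx.1)).continuousAt).continuousWithinAt
      · intro x hx r hr
        exact ((hVderiv x (le_trans hτ0 hx.1)).hasDerivWithinAt).liminf_right_slope_le hr
      · have hVτ : V τ = 0 := by
          refine Finset.sum_eq_zero fun i _ => ?_
          rw [dl_of_mem (hboxτ i).1 (hboxτ i).2]; ring
        rw [hVτ]
      · intro x hx
        have hx0 : 0 ≤ x := le_trans hτ0 hx.1
        have hxmem : x ∈ Set.Icc τ b := ⟨hx.1, hx.2.le⟩
        set P := p x with hPdef
        set M : ℝ := Real.sqrt (V x) with hM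
        have hMnonneg : 0 ≤ M := Real.sqrt_nonneg _
        have hdlM : ∀ i, |dl (P i)| ≤ M := by
          intro i
          rw [hM, ← Real.sqrt_sq_eq_abs]
          apply Real.sqrt_le_sqrt
          exact Finset.single_le_sum (f := fun i => dl (p x i) ^ 2)
            (fun i _ => sq_nonneg _) (Finset.mem_univ i)
        have hPK : P ∈ Set.Icc (fun _ : Fin n => (-1:ℝ)) (fun _ => (2:ℝ)) :=
          hmemK P (hK x hxmem)
        have hqK : q P ∈ Set.Icc (fun _ : Fin n => (-1:ℝ)) (fun _ => (2:ℝ)) := by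
          apply hmemK
          intro i
          exact ⟨by linarith [(hqbox P i).1], by linarith [(hqbox P i).2]⟩
        have hnormpq : ‖P - q P‖ ≤ M := by
          rw [pi_norm_le_iff_of_nonneg hMnonneg]
          intro i
          have hcoord : (P - q P) i = dl (P i) := by simp [dl, hqdef]
          rw [hcoord, Real.norm_eq_abs]
          exact hdlM i
        have hgdiff : ∀ i, |g P i - g (q P) i| ≤ L * M := by
          intro i
          have h1 : |g P i - g (q P) i| ≤ ‖g P - g (q P)‖ := by
            have h2 := norm_le_pi_norm (g P - g (q P)) i
            simpa [Real.norm_eq_abs] using h2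
          calc |g P i - g (q P) i| ≤ ‖g P - g (q P)‖ := h1
            _ ≤ L * ‖P - q P‖ := hLip P hPK (q P) hqK
            _ ≤ L * M := mul_le_mul_of_nonneg_left hnormpq hL0
        have hterm : ∀ i, 2 * dl (P i) * g P i ≤ 2 * (L * (M * M)) := by
          intro i
          have h2 : dl (P i) * (g P i - g (q P) i) ≤ L * (M * M) := by
            calc dl (P i) * (g P i - g (q P) i) ≤ |dl (P i) * (g P i - g (q P) i)| :=
                  le_abs_self _
              _ = |dl (P i)| * |g P i - g (q P) i| := abs_mul _ _
              _ ≤ M * (L * M) :=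
                  mul_le_mul (hdlM i) (hgdiff i) (abs_nonneg _) hMnonneg
              _ = L * (M * M) := by ring
          have h3 := hsign P i
          calc 2 * dl (P i) * g P i
              = 2 * (dl (P i) * g (q P) i) + 2 * (dl (P i) * (g P i - g (q P) i)) := by ring
            _ ≤ 2 * 0 + 2 * (L * (M * M)) := by
                refine add_le_add ?_ ?_
                · exact mul_le_mul_of_nonneg_left h3 (by norm_num)
                · exact mul_le_mul_of_nonneg_left h2 (by norm_num)
            _ = 2 * (L * (M * M)) := by ring
        have hMM : M * M = V x := Real.mul_self_sqrt (hVnonneg x)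
        calc ∑ i, 2 * dl (p x i) * g (p x) i ≤ ∑ _i : Fin n, 2 * (L * (M * M)) :=
              Finset.sum_le_sum fun i _ => hterm i
          _ = n * (2 * (L * (M * M))) := by
              rw [Finset.sum_const, Finset.card_univ, Fintype.card_fin, nsmul_eq_mul]
          _ = Kc * V x + 0 := by rw [← hMM, hKc]; ring
    intro s hs i
    have h1 := main s hs
    rw [gronwallBound_ε0, zero_mul] at h1
    have h2 : V s = 0 := le_antisymm h1 (hVnonneg s)
    have h3 : dl (p s i) ^ 2 = 0 := by
      have h4 := Finset.sum_eq_zero_iff_of_nonneg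
        (fun i (_ : i ∈ Finset.univ) => sq_nonneg (dl (p s i)))
      rw [hVdef] at h2
      exact (h4.mp h2) i (Finset.mem_univ i)
    exact mem_of_dl_eq_zero (pow_eq_zero_iff (n := 2) (by norm_num) |>.mp h3)
  -- invariance of the box
  have hbox : ∀ t : ℝ, 0 ≤ t → ∀ i, 0 ≤ p t i ∧ p t i ≤ 1 := by
    intro t₁ ht₁
    set T : Set ℝ := {t | t ∈ Set.Icc 0 t₁ ∧ ∀ s ∈ Set.Icc 0 t, ∀ i, 0 ≤ p s i ∧ p s i ≤ 1}
      with hTdef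
    have hT0 : (0:ℝ) ∈ T := by
      refine ⟨⟨le_refl _, ht₁⟩, fun s hs i => ?_⟩
      have hs0 : s = 0 := le_antisymm hs.2 hs.1
      rw [hs0]
      exact ⟨(hinit i).1, (hinit i).2⟩
    have hTbdd : BddAbove T := ⟨t₁, fun t ht => ht.1.2⟩
    set τ := sSup T with hτdef
    have hτ0 : 0 ≤ τ := le_csSup hTbdd hT0
    have hτt₁ : τ ≤ t₁ := csSup_le ⟨0, hT0⟩ fun t ht => ht.1.2
    have claim0 : ∀ s, 0 ≤ s → s < τ → ∀ i, 0 ≤ p s i ∧ p s i ≤ 1 := by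
      intro s hs0 hlt
      obtain ⟨t, htT, hst⟩ := exists_lt_of_lt_csSup ⟨0, hT0⟩ hlt
      exact htT.2 s ⟨hs0, hst.le⟩
    have claimτ : ∀ i, 0 ≤ p τ i ∧ p τ i ≤ 1 := by
      rcases eq_or_lt_of_le hτ0 with h0 | h0
      · intro i
        rw [← h0]
        exact ⟨(hinit i).1, (hinit i).2⟩
      · intro i
        have hcont : ContinuousAt (fun u => p u i) τ :=
          ContinuousAt.comp (Continuous.continuousAt (continuous_apply i)) (hpcont τ hτ0)
        have htd : Tendsto (fun u => p u i) (nhdsWithin τ (Set.Iio τ)) (nhds (p τ i)) :=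
          hcont.continuousWithinAt
        have hev : ∀ᶠ u in nhdsWithin τ (Set.Iio τ), p u i ∈ Set.Icc (0:ℝ) 1 := by
          filter_upwards [Ioo_mem_nhdsLT_of_mem (Set.mem_Ioc.mpr ⟨h0, le_refl τ⟩)] with u hu
          exact Set.mem_Icc.mpr (claim0 u hu.1.le hu.2 i)
        have hmem := isClosed_Icc.mem_of_tendsto htd hev
        exact ⟨(Set.mem_Icc.mp hmem).1, (Set.mem_Icc.mp hmem).2⟩
    have claim1 : ∀ s ∈ Set.Icc (0:ℝ) τ, ∀ i, 0 ≤ p s i ∧ p s i ≤ 1 := by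
      intro s hs i
      rcases lt_or_eq_of_le hs.2 with hlt | heq
      · exact claim0 s hs.1 hlt i
      · rw [heq]; exact claimτ i
    have hτeq : τ = t₁ := by
      by_contra hne
      have hτlt : τ < t₁ := lt_of_le_of_ne hτt₁ hne
      have hUopen : IsOpen {x : Fin n → ℝ | ∀ i, x i ∈ Set.Ioo (-1:ℝ) 2} := by
        have hrw : {x : Fin n → ℝ | ∀ i, x i ∈ Set.Ioo (-1:ℝ) 2}
            = Set.pi Set.univ (fun _ : Fin n => Set.Ioo (-1:ℝ) 2) := by
          ext x; simp [Set.mem_pi]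
        rw [hrw]
        exact isOpen_set_pi Set.finite_univ fun i _ => isOpen_Ioo
      have hpU : p τ ∈ {x : Fin n → ℝ | ∀ i, x i ∈ Set.Ioo (-1:ℝ) 2} := by
        intro i
        have h5 := claimτ i
        exact Set.mem_Ioo.mpr ⟨by linarith [h5.1], by linarith [h5.2]⟩
      have hnh : p ⁻¹' {x : Fin n → ℝ | ∀ i, x i ∈ Set.Ioo (-1:ℝ) 2} ∈ nhds τ :=
        (hpcont τ hτ0).preimage_mem_nhds (hUopen.mem_nhds hpU)
      obtain ⟨ε, hε, hball⟩ := Metric.mem_nhds_iff.mp hnh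
      set b := min (τ + ε/2) t₁ with hbdef
      have hτb : τ < b := lt_min (by linarith) hτlt
      have hKb : ∀ s ∈ Set.Icc τ b, ∀ i, -1 ≤ p s i ∧ p s i ≤ 2 := by
        intro s hs i
        have hsb : dist s τ < ε := by
          rw [Real.dist_eq, abs_of_nonneg (by linarith [hs.1])]
          have hsle : s ≤ τ + ε/2 := le_trans hs.2 (min_le_left _ _)
          linarith
        have hmem := hball (Metric.mem_ball.mpr hsb)
        exact ⟨(hmem i).1.le, (hmem i).2.le⟩
      have hbool := key τ b hτ0 hτb.le claimτ hKb
      have hbT : b ∈ T := by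
        refine ⟨⟨by linarith, min_le_right _ _⟩, fun s hs i => ?_⟩
        rcases le_or_gt s τ with h6 | h6
        · exact claim1 s ⟨hs.1, h6⟩ i
        · exact hbool s ⟨h6.le, hs.2⟩ i
      have hble : b ≤ τ := le_csSup hTbdd hbT
      linarith
    exact claim1 t₁ ⟨ht₁, hτeq.ge⟩
  -- Stage 2: decay of the squared norm
  have hspec' : β * f 1 * Finset.univ.sup' H hW.eigenvalues < δ := by
    rw [div_lt_one hδ] at hspec
    exact hspec
  set lam := Finset.univ.sup' H hW.eigenvalues with hlamdef
  set c : ℝ := δ - β * f 1 * lam with hcdef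
  have hcpos : 0 < c := by rw [hcdef]; linarith
  set V2 : ℝ → ℝ := fun t => ∑ i, (p t i) ^ 2 with hV2def
  have hV2nonneg : ∀ t, 0 ≤ V2 t := fun t => Finset.sum_nonneg fun i _ => sq_nonneg _
  have hV2deriv : ∀ t : ℝ, 0 ≤ t →
      HasDerivAt V2 (∑ i, 2 * p t i * g (p t) i) t := by
    intro t ht
    refine HasDerivAt.fun_sum fun i _ => ?_
    have hsq : HasDerivAt (fun y : ℝ => y ^ 2) (2 * p t i) (p t i) := by
      simpa using hasDerivAt_pow 2 (p t i)
    have h1 := hsq.comp t (hderiv t ht i)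
    simpa [mul_assoc, Function.comp_def] using h1
  have bound2 : ∀ x : ℝ, 0 ≤ x →
      (∑ i, 2 * p x i * g (p x) i) ≤ (-(2*c)) * V2 x + 0 := by
    intro x hx0
    set P := p x with hPdef
    have hP : ∀ j, 0 ≤ P j ∧ P j ≤ 1 := hbox x hx0
    open Matrix in
    have hWmul : ∀ i, (W *ᵥ P) i = ∑ j, (∑ h, (Inc i h:ℝ)*(Inc j h:ℝ)) * P j := by
      intro i
      rw [Matrix.mulVec, dotProduct]
      refine Finset.sum_congr rfl fun j _ => ?_
      rw [hWdef i j]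
      push_cast
      ring
    have hAle : ∀ i, (∑ h : Fin m, (Inc i h : ℝ) *
        ∑ l ∈ Finset.Icc 1 (edgeOf Inc h).card, f l * PsiE (edgeOf Inc h) P l)
        ≤ f 1 * (W *ᵥ P) i := by
      intro i
      calc (∑ h : Fin m, (Inc i h : ℝ) *
          ∑ l ∈ Finset.Icc 1 (edgeOf Inc h).card, f l * PsiE (edgeOf Inc h) P l)
          ≤ ∑ h : Fin m, (Inc i h : ℝ) * (f 1 * ∑ j ∈ edgeOf Inc h, P j) := by
            refine Finset.sum_le_sum fun h _ => ?_
            exact mul_le_mul_of_nonneg_left (weight_le hconc hf0 hnonneg _ hP)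
              (Nat.cast_nonneg _)
        _ = ∑ h : Fin m, (Inc i h : ℝ) * (f 1 * ∑ j, (Inc j h : ℝ) * P j) := by
            refine Finset.sum_congr rfl fun h _ => ?_
            rw [edge_sum hInc h P]
        _ = ∑ h : Fin m, ∑ j, f 1 * ((Inc i h:ℝ) * (Inc j h:ℝ) * P j) := by
            refine Finset.sum_congr rfl fun h _ => ?_
            rw [Finset.mul_sum, Finset.mul_sum]
            refine Finset.sum_congr rfl fun j _ => by ring
        _ = ∑ j, ∑ h : Fin m, f 1 * ((Inc i h:ℝ) * (Inc j h:ℝ) * P j) := Finset.sum_comm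
        _ = f 1 * ∑ j, (∑ h, (Inc i h:ℝ) * (Inc j h:ℝ)) * P j := by
            rw [Finset.mul_sum]
            refine Finset.sum_congr rfl fun j _ => ?_
            rw [Finset.sum_mul, Finset.mul_sum]
        _ = f 1 * (W *ᵥ P) i := by rw [hWmul i]
    have hstep : ∀ i, 2 * P i * g P i ≤
        2 * (β * f 1 * (P i * (W *ᵥ P) i)) - 2 * δ * P i ^ 2 := by
      intro i
      set A := ∑ h : Fin m, (Inc i h : ℝ) *
        ∑ l ∈ Finset.Icc 1 (edgeOf Inc h).card, f l * PsiE (edgeOf Inc h) P l with hAdef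
      have hA0 : 0 ≤ A := hA_nonneg P hP i
      have hgi : g P i = β * A * (1 - P i) - δ * P i := hgformula P i
      have h1 : P i * A * (1 - P i) ≤ P i * A := by
        have := mul_le_of_le_one_right (mul_nonneg (hP i).1 hA0)
          (by linarith [(hP i).1] : (1:ℝ) - P i ≤ 1)
        exact this
      have h2 : P i * A ≤ P i * (f 1 * (W *ᵥ P) i) :=
        mul_le_mul_of_nonneg_left (hAle i) (hP i).1
      have h3 : β * (P i * A * (1 - P i)) ≤ β * (P i * (f 1 * (W *ᵥ P) i)) :=
        mul_le_mul_of_nonneg_left (h1.trans h2) hβ.le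
      calc 2 * P i * g P i = 2 * (β * (P i * A * (1 - P i))) - 2 * δ * P i ^ 2 := by
            rw [hgi]; ring
        _ ≤ 2 * (β * (P i * (f 1 * (W *ᵥ P) i))) - 2 * δ * P i ^ 2 := by linarith
        _ = 2 * (β * f 1 * (P i * (W *ᵥ P) i)) - 2 * δ * P i ^ 2 := by ring
    have hray : P ⬝ᵥ (W *ᵥ P) ≤ lam * (P ⬝ᵥ P) := rayleigh_bound H W hW P
    have hdot1 : P ⬝ᵥ (W *ᵥ P) = ∑ i, P i * (W *ᵥ P) i := rfl
    have hdot2 : P ⬝ᵥ P = ∑ i, P i ^ 2 := by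
      rw [dotProduct]
      exact Finset.sum_congr rfl fun i _ => (sq (P i)).symm
    have hsum1 : ∑ i, P i * (W *ᵥ P) i ≤ lam * V2 x := by
      rw [← hdot1, hV2def]
      calc P ⬝ᵥ (W *ᵥ P) ≤ lam * (P ⬝ᵥ P) := hray
        _ = lam * ∑ i, (p x i) ^ 2 := by rw [hdot2]
    calc ∑ i, 2 * p x i * g (p x) i
        ≤ ∑ i, (2 * (β * f 1 * (P i * (W *ᵥ P) i)) - 2 * δ * P i ^ 2) :=
          Finset.sum_le_sum fun i _ => hstep i
      _ = 2 * (β * f 1) * (∑ i, P i * (W *ᵥ P) i) - 2 * δ * ∑ i, P i ^ 2 := by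
          rw [Finset.mul_sum, Finset.mul_sum, ← Finset.sum_sub_distrib]
          exact Finset.sum_congr rfl fun i _ => by ring
      _ ≤ 2 * (β * f 1) * (lam * V2 x) - 2 * δ * V2 x := by
          have hbf : 0 ≤ 2 * (β * f 1) := by
            have h7 := hnonneg 1
            have h8 := hβ.le
            nlinarith
          have := mul_le_mul_of_nonneg_left hsum1 hbf
          rw [hV2def]
          linarith [this]
      _ = (-(2*c)) * V2 x + 0 := by rw [hcdef]; ring
  have hV2b : ∀ t : ℝ, 0 ≤ t → V2 t ≤ V2 0 * Real.exp (-(2*c)*t) := by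
    intro t ht
    have hmain : ∀ x ∈ Set.Icc (0:ℝ) t, V2 x ≤ gronwallBound (V2 0) (-(2*c)) 0 (x - 0) := by
      apply le_gronwallBound_of_liminf_deriv_right_le
        (f' := fun s => ∑ i, 2 * p s i * g (p s) i)
      · intro x hx
        exact ((hV2deriv x hx.1).continuousAt).continuousWithinAt
      · intro x hx r hr
        exact ((hV2deriv x hx.1).hasDerivWithinAt).liminf_right_slope_le hr
      · exact le_refl _
      · intro x hx
        exact bound2 x hx.1
    have := hmain t ⟨ht, le_refl t⟩
    rwa [gronwallBound_ε0, sub_zero] at this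
  have hexp : Tendsto (fun t : ℝ => V2 0 * Real.exp (-(2*c)*t)) atTop (nhds 0) := by
    have h1 : Tendsto (fun t : ℝ => (2*c)*t) atTop atTop :=
      Tendsto.const_mul_atTop (by positivity) tendsto_id
    have h2 : Tendsto (fun t : ℝ => Real.exp (-((2*c)*t))) atTop (nhds 0) :=
      Real.tendsto_exp_neg_atTop_nhds_zero.comp h1
    have h3 := h2.const_mul (V2 0)
    simpa [neg_mul, mul_zero] using h3
  have hV2tend : Tendsto V2 atTop (nhds 0) := by
    refine tendsto_of_tendsto_of_tendsto_of_le_of_le' tendsto_const_nhds hexp ?_ ?_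
    · exact Eventually.of_forall fun t => hV2nonneg t
    · filter_upwards [eventually_ge_atTop (0:ℝ)] with t ht
      exact hV2b t ht
  have hcoord : ∀ i, Tendsto (fun t => p t i) atTop (nhds 0) := by
    intro i
    have hsq : Tendsto (fun t => (p t i) ^ 2) atTop (nhds 0) := by
      refine tendsto_of_tendsto_of_tendsto_of_le_of_le' tendsto_const_nhds hV2tend ?_ ?_
      · exact Eventually.of_forall fun t => sq_nonneg _
      · refine Eventually.of_forall fun t => ?_
        exact Finset.single_le_sum (f := fun i => (p t i) ^ 2)
          (fun i _ => sq_nonneg _) (Finset.mem_univ i)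
    have habs : Tendsto (fun t => |p t i|) atTop (nhds 0) := by
      have hrw : (fun t => |p t i|) = fun t => Real.sqrt ((p t i) ^ 2) :=
        funext fun t => (Real.sqrt_sq_eq_abs _).symm
      rw [hrw]
      have := (Real.continuous_sqrt.tendsto 0).comp hsq
      simpa [Function.comp_def] using this
    have hnegabs : Tendsto (fun t => -|p t i|) atTop (nhds 0) := by
      simpa using habs.neg
    refine tendsto_of_tendsto_of_tendsto_of_le_of_le' hnegabs habs ?_ ?_
    · exact Eventually.of_forall fun t => neg_abs_le _
    · exact Eventually.of_forall fun t => le_abs_self _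
  rw [tendsto_pi_nhds]
  intro i
  simpa using hcoord i
end
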